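/- Let H₁, H₂ be complex Hilbert spaces, H := H₁ × H₂, and let 𝒜 = [[A, B],[C, D]] be a block operator matrix satisfying the basic assumptions. Suppose D = D* and D(D) ⊆ D(B). Then the induced operator 𝒜 is self-adjoint if and only if there exists λ ∈ ρ(D) such that (A − B(D−λ)⁻¹C)* = A − B(D−λ̄)⁻¹C, where both Schur complements have domain D(A) ∩ D(C); moreover, in this case the equality holds for every λ ∈ ρ(D). -/

import Mathlib

open LinearPMap
open scoped LinearPMap

namespace BlockOp

variable {E F G X₁ X₂ Y₁ Y₂ : Type*}
  [AddCommGroup E] [Module ℂ E] [AddCommGroup F] [Module ℂ F] [AddCommGroup G] [Module ℂ G]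
  [AddCommGroup X₁] [Module ℂ X₁] [AddCommGroup X₂] [Module ℂ X₂]
  [AddCommGroup Y₁] [Module ℂ Y₁] [AddCommGroup Y₂] [Module ℂ Y₂]

/-- The operator on `X₁ × X₂` induced by a block operator matrix `[[A, B], [C, D]]`. -/
noncomputable def blockOp (A : X₁ →ₗ.[ℂ] Y₁) (B : X₂ →ₗ.[ℂ] Y₁)
    (C : X₁ →ₗ.[ℂ] Y₂) (D : X₂ →ₗ.[ℂ] Y₂) : (X₁ × X₂) →ₗ.[ℂ] (Y₁ × Y₂) where
  domain := (A.domain ⊓ C.domain).prod (B.domain ⊓ D.domain)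
  toFun := LinearMap.prod
    (A.toFun ∘ₗ Submodule.inclusion inf_le_left ∘ₗ
        (LinearMap.fst ℂ X₁ X₂).restrict
          (p := (A.domain ⊓ C.domain).prod (B.domain ⊓ D.domain))
          (q := A.domain ⊓ C.domain) (fun _ hx => hx.1)
      + B.toFun ∘ₗ Submodule.inclusion inf_le_left ∘ₗ
        (LinearMap.snd ℂ X₁ X₂).restrict
          (p := (A.domain ⊓ C.domain).prod (B.domain ⊓ D.domain))
          (q := B.domain ⊓ D.domain) (fun _ hx => hx.2))
    (C.toFun ∘ₗ Submodule.inclusion inf_le_right ∘ₗ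
        (LinearMap.fst ℂ X₁ X₂).restrict
          (p := (A.domain ⊓ C.domain).prod (B.domain ⊓ D.domain))
          (q := A.domain ⊓ C.domain) (fun _ hx => hx.1)
      + D.toFun ∘ₗ Submodule.inclusion inf_le_right ∘ₗ
        (LinearMap.snd ℂ X₁ X₂).restrict
          (p := (A.domain ⊓ C.domain).prod (B.domain ⊓ D.domain))
          (q := B.domain ⊓ D.domain) (fun _ hx => hx.2))

/-- A linear operator on a product space has a matrix representation if it is induced
by some block operator matrix. -/
def HasMatrixRep (T : (X₁ × X₂) →ₗ.[ℂ] (Y₁ × Y₂)) : Prop :=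
  ∃ (A : X₁ →ₗ.[ℂ] Y₁) (B : X₂ →ₗ.[ℂ] Y₁) (C : X₁ →ₗ.[ℂ] Y₂) (D : X₂ →ₗ.[ℂ] Y₂),
    T = blockOp A B C D

/-- The composition of two partially defined operators, with its natural domain
`{x ∈ D(B) : B x ∈ D(A)}`. -/
noncomputable def pcomp (A : F →ₗ.[ℂ] G) (B : E →ₗ.[ℂ] F) : E →ₗ.[ℂ] G where
  domain :=
    { carrier := {x | ∃ hx : x ∈ B.domain, B ⟨x, hx⟩ ∈ A.domain}
      zero_mem' := ⟨B.domain.zero_mem, by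
        have : (⟨0, B.domain.zero_mem⟩ : B.domain) = 0 := rfl
        rw [this, LinearPMap.map_zero]; exact A.domain.zero_mem⟩
      add_mem' := by
        rintro a b ⟨ha, ha'⟩ ⟨hb, hb'⟩
        refine ⟨add_mem ha hb, ?_⟩
        have : (⟨a + b, add_mem ha hb⟩ : B.domain) = ⟨a, ha⟩ + ⟨b, hb⟩ := rfl
        rw [this, LinearPMap.map_add]
        exact add_mem ha' hb'
      smul_mem' := by
        rintro c a ⟨ha, ha'⟩
        refine ⟨Submodule.smul_mem _ c ha, ?_⟩
        have : (⟨c • a, Submodule.smul_mem _ c ha⟩ : B.domain) = c • (⟨a, ha⟩ : B.domain) := rfl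
        rw [this, LinearPMap.map_smul]
        exact Submodule.smul_mem _ c ha' }
  toFun := A.toFun ∘ₗ LinearMap.codRestrict A.domain
      (B.toFun ∘ₗ
        { toFun := fun x => (⟨(x : E), x.2.choose⟩ : B.domain)
          map_add' := fun x y => Subtype.ext rfl
          map_smul' := fun c x => Subtype.ext rfl })
      (fun x => x.2.choose_spec)

end BlockOp

namespace BlockOp

section Transport

variable {E F G E' F' : Type*}
  [AddCommGroup E] [Module ℂ E] [AddCommGroup F] [Module ℂ F] [AddCommGroup G] [Module ℂ G]
  [AddCommGroup E'] [Module ℂ E'] [AddCommGroup F'] [Module ℂ F']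

/-- Transport a partially defined linear map along linear equivalences. -/
noncomputable def pmapCongr (e : E ≃ₗ[ℂ] E') (T : E' →ₗ.[ℂ] F') (e' : F' ≃ₗ[ℂ] F) :
    E →ₗ.[ℂ] F where
  domain := T.domain.comap (e : E →ₗ[ℂ] E')
  toFun := (e' : F' →ₗ[ℂ] F) ∘ₗ T.toFun ∘ₗ
    ((e : E →ₗ[ℂ] E').restrict (p := T.domain.comap (e : E →ₗ[ℂ] E')) (q := T.domain)
      (fun _ hx => hx))

end Transport

section Corners

variable {X₁ X₂ Y₁ Y₂ : Type*}
  [AddCommGroup X₁] [Module ℂ X₁] [AddCommGroup X₂] [Module ℂ X₂]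
  [AddCommGroup Y₁] [Module ℂ Y₁] [AddCommGroup Y₂] [Module ℂ Y₂]

/-- The upper-left corner `P₁ 𝒜 J₁` of an operator on a product space, with domain
`{x₁ : (x₁, 0) ∈ D(𝒜)}`. -/
noncomputable def corner₁₁ (T : (X₁ × X₂) →ₗ.[ℂ] (Y₁ × Y₂)) : X₁ →ₗ.[ℂ] Y₁ where
  domain := T.domain.comap (LinearMap.inl ℂ X₁ X₂)
  toFun := LinearMap.fst ℂ Y₁ Y₂ ∘ₗ T.toFun ∘ₗ
    ((LinearMap.inl ℂ X₁ X₂).restrict (p := T.domain.comap (LinearMap.inl ℂ X₁ X₂))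
      (q := T.domain) (fun _ hx => hx))

/-- The lower-left corner `P₂ 𝒜 J₁`. -/
noncomputable def corner₂₁ (T : (X₁ × X₂) →ₗ.[ℂ] (Y₁ × Y₂)) : X₁ →ₗ.[ℂ] Y₂ where
  domain := T.domain.comap (LinearMap.inl ℂ X₁ X₂)
  toFun := LinearMap.snd ℂ Y₁ Y₂ ∘ₗ T.toFun ∘ₗ
    ((LinearMap.inl ℂ X₁ X₂).restrict (p := T.domain.comap (LinearMap.inl ℂ X₁ X₂))
      (q := T.domain) (fun _ hx => hx))

/-- The upper-right corner `P₁ 𝒜 J₂`. -/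
noncomputable def corner₁₂ (T : (X₁ × X₂) →ₗ.[ℂ] (Y₁ × Y₂)) : X₂ →ₗ.[ℂ] Y₁ where
  domain := T.domain.comap (LinearMap.inr ℂ X₁ X₂)
  toFun := LinearMap.fst ℂ Y₁ Y₂ ∘ₗ T.toFun ∘ₗ
    ((LinearMap.inr ℂ X₁ X₂).restrict (p := T.domain.comap (LinearMap.inr ℂ X₁ X₂))
      (q := T.domain) (fun _ hx => hx))

/-- The lower-right corner `P₂ 𝒜 J₂`. -/
noncomputable def corner₂₂ (T : (X₁ × X₂) →ₗ.[ℂ] (Y₁ × Y₂)) : X₂ →ₗ.[ℂ] Y₂ where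
  domain := T.domain.comap (LinearMap.inr ℂ X₁ X₂)
  toFun := LinearMap.snd ℂ Y₁ Y₂ ∘ₗ T.toFun ∘ₗ
    ((LinearMap.inr ℂ X₁ X₂).restrict (p := T.domain.comap (LinearMap.inr ℂ X₁ X₂))
      (q := T.domain) (fun _ hx => hx))

end Corners

section Shift

variable {E : Type*} [AddCommGroup E] [Module ℂ E]

/-- `T - λ`, i.e. `T - λ·I`, with domain `D(T)`. -/
noncomputable def shift (T : E →ₗ.[ℂ] E) (lam : ℂ) : E →ₗ.[ℂ] E :=
  T - (lam • (LinearMap.id : E →ₗ[ℂ] E)).toPMap ⊤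

/-- The identity as a partially defined operator with full domain. -/
noncomputable def idP (E : Type*) [AddCommGroup E] [Module ℂ E] : E →ₗ.[ℂ] E :=
  (LinearMap.id : E →ₗ[ℂ] E).toPMap ⊤

end Shift

section Resolvent

variable {E : Type*} [NormedAddCommGroup E] [NormedSpace ℂ E]

/-- `R` is the (bounded, everywhere defined) inverse of `T - λ`;
this witnesses that `λ` belongs to the resolvent set of `T`. -/
structure IsResolventAt (T : E →ₗ.[ℂ] E) (lam : ℂ) (R : E →L[ℂ] E) : Prop where
  mem : ∀ y, R y ∈ T.domain
  right_inv : ∀ y, T ⟨R y, mem y⟩ - lam • (R y) = y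
  left_inv : ∀ x : T.domain, R (T x - lam • (x : E)) = x

/-- The resolvent set of `T`: those `λ ∈ ℂ` for which `T - λ` is a bijection from `D(T)`
onto the whole space with bounded inverse. -/
def resolventSet (T : E →ₗ.[ℂ] E) : Set ℂ :=
  {lam | ∃ R : E →L[ℂ] E, IsResolventAt T lam R}

end Resolvent

section RelativeBound

variable {E F G : Type*} [NormedAddCommGroup E] [NormedSpace ℂ E]
  [NormedAddCommGroup F] [NormedSpace ℂ F] [NormedAddCommGroup G] [NormedSpace ℂ G]

/-- `S` is `T`-bounded with constants `a`, `b`: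
`D(T) ⊆ D(S)` and `‖S x‖ ≤ a ‖x‖ + b ‖T x‖` on `D(T)`. -/
structure RelBound (S : E →ₗ.[ℂ] G) (T : E →ₗ.[ℂ] F) (a b : ℝ) : Prop where
  dom_le : T.domain ≤ S.domain
  bound : ∀ x : T.domain, ‖S ⟨(x : E), dom_le x.2⟩‖ ≤ a * ‖(x : E)‖ + b * ‖T x‖

/-- `S` is `T`-bounded with relative bound `< c`. -/
def IsRelBoundedLt (S : E →ₗ.[ℂ] G) (T : E →ₗ.[ℂ] F) (c : ℝ) : Prop :=
  ∃ b, 0 ≤ b ∧ b < c ∧ ∃ a, 0 ≤ a ∧ RelBound S T a b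

/-- `S` is `T`-bounded with relative bound `≤ c` (for `c = 0`: relative bound `0`). -/
def IsRelBoundedLe (S : E →ₗ.[ℂ] G) (T : E →ₗ.[ℂ] F) (c : ℝ) : Prop :=
  ∀ b, c < b → ∃ a, 0 ≤ a ∧ RelBound S T a b

end RelativeBound

section HilbertProduct

variable {H₁ H₂ K₁ K₂ : Type*}
  [NormedAddCommGroup H₁] [InnerProductSpace ℂ H₁]
  [NormedAddCommGroup H₂] [InnerProductSpace ℂ H₂]
  [NormedAddCommGroup K₁] [InnerProductSpace ℂ K₁]
  [NormedAddCommGroup K₂] [InnerProductSpace ℂ K₂]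

/-- The operator induced by a block operator matrix on the Hilbert space
`H₁ ×_{ℓ²} H₂`, i.e. `WithLp 2 (H₁ × H₂)`. -/
noncomputable def blockOpL (A : H₁ →ₗ.[ℂ] K₁) (B : H₂ →ₗ.[ℂ] K₁)
    (C : H₁ →ₗ.[ℂ] K₂) (D : H₂ →ₗ.[ℂ] K₂) :
    WithLp 2 (H₁ × H₂) →ₗ.[ℂ] WithLp 2 (K₁ × K₂) :=
  pmapCongr (WithLp.linearEquiv 2 ℂ (H₁ × H₂)) (blockOp A B C D)
    (WithLp.linearEquiv 2 ℂ (K₁ × K₂)).symm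

/-- A linear operator on `H₁ ×_{ℓ²} H₂` has a matrix representation if it is induced by
some block operator matrix. -/
def HasMatrixRepL (T : WithLp 2 (H₁ × H₂) →ₗ.[ℂ] WithLp 2 (K₁ × K₂)) : Prop :=
  ∃ (A : H₁ →ₗ.[ℂ] K₁) (B : H₂ →ₗ.[ℂ] K₁) (C : H₁ →ₗ.[ℂ] K₂) (D : H₂ →ₗ.[ℂ] K₂),
    T = blockOpL A B C D

end HilbertProduct

section EssSelfAdjoint

variable {E : Type*} [NormedAddCommGroup E] [InnerProductSpace ℂ E] [CompleteSpace E]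

/-- An operator is essentially self-adjoint if it is closable and its closure is
self-adjoint. -/
def IsEssentiallySelfAdjoint (T : E →ₗ.[ℂ] E) : Prop :=
  T.IsClosable ∧ IsSelfAdjoint T.closure

end EssSelfAdjoint

end BlockOp

/-!
Write `S(λ) = A - B (D - λ)⁻¹ C` on `D(A) ∩ D(C)`. Since `((D - λ)⁻¹)* = (D - λ̄)⁻¹` and
`B ⊆ C*`, always `S(λ̄) ⊆ S(λ)*`. Because `B` is closable and `ran (D - λ)⁻¹ ⊆ D(B)`, the operator
`G = B (D - λ)⁻¹` is bounded (closed graph theorem), and for `u ∈ D(S(λ)*)` the vector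
`(u, -G* u)` lies in `D(𝒜*)`; so if `𝒜` is self-adjoint, `u ∈ D(𝒜)` and `u ∈ D(S(λ̄))`.
Conversely, if `S(λ)* = S(λ̄)` and `X ∈ D(𝒜*)`, testing `𝒜*` against `(x, 0)` and
`(0, (D - λ)⁻¹ C x)` shows `X₁ ∈ D(S(λ)*) ⊆ D(A) ∩ D(C)`, and testing against `(0, x₂)` then
shows `X₂ ∈ D(D*) = D(D)`; hence `D(𝒜*) ⊆ D(𝒜)` and the symmetric operator `𝒜` is
self-adjoint. For self-adjoint `D` every non-real `λ`, e.g. `λ = i`, lies in `ρ(D)`: the bound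
`‖(D - λ) x‖ ≥ |Im λ| ‖x‖` makes `D - λ` injective with closed range (`D` is closed), and the
range is dense because `ker (D* - λ̄) = 0` by the same bound.
-/

open Filter Topology
open scoped InnerProductSpace ComplexConjugate

namespace LinearPMap

variable {E F : Type*} [NormedAddCommGroup E] [InnerProductSpace ℂ E] [CompleteSpace E]
  [NormedAddCommGroup F] [InnerProductSpace ℂ F]

theorem IsFormalAdjoint.of_le_adjoint {T : E →ₗ.[ℂ] F} {S : F →ₗ.[ℂ] E}
    (hT : Dense (T.domain : Set E)) (h : S ≤ T†) : S.IsFormalAdjoint T := fun x y => by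
  rw [h.2 (y := ⟨x, h.1 x.2⟩) rfl]
  exact adjoint_isFormalAdjoint hT _ y

end LinearPMap

namespace LinearPMap.IsClosable

variable {E F H : Type*} [NormedAddCommGroup E] [NormedSpace ℂ E]
  [NormedAddCommGroup F] [NormedSpace ℂ F] [CompleteSpace F]
  [NormedAddCommGroup H] [NormedSpace ℂ H] [CompleteSpace H]

theorem exists_continuousLinearMap_comp {B : E →ₗ.[ℂ] F} (hB : B.IsClosable) (R : H →L[ℂ] E)
    (hRB : ∀ y, R y ∈ B.domain) : ∃ G : H →L[ℂ] F, ∀ y, G y = B ⟨R y, hRB y⟩ := by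
  let g : H →ₗ[ℂ] F := B.toFun ∘ₗ (R : H →ₗ[ℂ] E).codRestrict B.domain hRB
  refine ⟨⟨g, g.continuous_of_seq_closed_graph fun u x y hu hgu => ?_⟩, fun _ => rfl⟩
  have hlim : (R x, y) ∈ _root_.closure (B.graph : Set (E × F)) :=
    mem_closure_of_tendsto (((R.continuous.tendsto x).comp hu).prodMk_nhds hgu)
      (Eventually.of_forall fun n => B.mem_graph ⟨R (u n), hRB (u n)⟩)
  rw [← Submodule.topologicalClosure_coe, hB.graph_closure_eq_closure_graph] at hlim
  exact B.closure.mem_graph_snd_inj hlim (le_graph_of_le B.le_closure (B.mem_graph _)) rfl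

end LinearPMap.IsClosable

namespace BlockOp

section Resolvent

variable {E : Type*} [NormedAddCommGroup E] [InnerProductSpace ℂ E]
  {D : E →ₗ.[ℂ] E} {lam : ℂ}

def subSmul (T : E →ₗ.[ℂ] E) (lam : ℂ) : T.domain →ₗ[ℂ] E :=
  T.toFun - lam • T.domain.subtype

theorem subSmul_apply (T : E →ₗ.[ℂ] E) (lam : ℂ) (x : T.domain) :
    subSmul T lam x = T x - lam • (x : E) := rfl

theorem isClosed_range_subSmul [CompleteSpace E] {K : NNReal} (hD : D.IsClosed)
    (hK : AntilipschitzWith K (subSmul D lam)) :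
    IsClosed (LinearMap.range (subSmul D lam) : Set E) := by
  refine isClosed_of_closure_subset fun y hy => ?_
  obtain ⟨u, hu, huy⟩ := mem_closure_iff_seq_limit.mp hy
  choose x hx using hu
  have hxc : CauchySeq x := by
    have hLx : CauchySeq (subSmul D lam ∘ x) := by
      simpa [Function.comp_def, hx] using huy.cauchySeq
    have : NeBot (comap (subSmul D lam) (map (subSmul D lam ∘ x) atTop)) :=
      (map_neBot (f := atTop) (m := x)).mono le_comap_map
    exact (hLx.comap hK.comap_uniformity_le).mono le_comap_map
  obtain ⟨z, hz⟩ :=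
    cauchySeq_tendsto_of_complete (uniformContinuous_subtype_val.comp_cauchySeq hxc)
  have hDx : Tendsto (fun n => D (x n)) atTop (𝓝 (y + lam • z)) := by
    have : (fun n => D (x n)) = fun n => u n + lam • (x n : E) := funext fun n => by
      rw [← hx, subSmul_apply, sub_add_cancel]
    exact this ▸ huy.add (hz.const_smul lam)
  have hgraph : (z, y + lam • z) ∈ D.graph :=
    hD.mem_of_tendsto (hz.prodMk_nhds hDx) (Eventually.of_forall fun n => D.mem_graph (x n))
  obtain ⟨w, hwz, hw⟩ := D.mem_graph_iff.mp hgraph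
  exact ⟨w, by rw [subSmul_apply, hw, hwz, add_sub_cancel_right]⟩

theorem exists_isResolventAt_of_bijective {K : NNReal}
    (hL : Function.Bijective (subSmul D lam)) (hK : AntilipschitzWith K (subSmul D lam)) :
    ∃ R : E →L[ℂ] E, IsResolventAt D lam R := by
  let e := LinearEquiv.ofBijective _ hL
  have hcont : Continuous (D.domain.subtype ∘ₗ (e.symm : E →ₗ[ℂ] D.domain)) :=
    continuous_subtype_val.comp (hK.to_rightInverse e.apply_symm_apply).continuous
  exact ⟨⟨_, hcont⟩, fun y => (e.symm y).2, fun y => e.apply_symm_apply y,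
    fun x => congrArg Subtype.val (e.symm_apply_apply x)⟩

theorem IsResolventAt.apply_eq {R : E →L[ℂ] E} (hR : IsResolventAt D lam R) (z : E) :
    D ⟨R z, hR.mem z⟩ = z + lam • R z :=
  eq_add_of_sub_eq (hR.right_inv z)

variable [CompleteSpace E]

theorem abs_im_mul_norm_le_norm_subSmul (hDd : Dense (D.domain : Set E)) (hD : D ≤ D†)
    (x : D.domain) :
    |lam.im| * ‖(x : E)‖ ≤ ‖subSmul D lam x‖ := by
  have hreal : (⟪D x, (x : E)⟫_ℂ).im = 0 := by
    rw [← Complex.conj_eq_iff_im, inner_conj_symm]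
    exact ((IsFormalAdjoint.of_le_adjoint hDd hD) x x).symm
  have him : (⟪subSmul D lam x, (x : E)⟫_ℂ).im = lam.im * ‖(x : E)‖ ^ 2 := by
    rw [subSmul_apply, inner_sub_left, inner_smul_left, inner_self_eq_norm_sq_to_K]
    simp [hreal, ← Complex.ofReal_pow]
  have hcs : |lam.im| * ‖(x : E)‖ ^ 2 ≤ ‖subSmul D lam x‖ * ‖(x : E)‖ := by
    calc |lam.im| * ‖(x : E)‖ ^ 2 = |(⟪subSmul D lam x, (x : E)⟫_ℂ).im| := by
          rw [him, abs_mul, abs_of_nonneg (sq_nonneg ‖(x : E)‖)]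
      _ ≤ ‖⟪subSmul D lam x, (x : E)⟫_ℂ‖ := Complex.abs_im_le_norm _
      _ ≤ ‖subSmul D lam x‖ * ‖(x : E)‖ := norm_inner_le_norm _ _
  rcases (norm_nonneg (x : E)).eq_or_lt with hx | hx
  · rw [← hx, mul_zero]; exact norm_nonneg _
  · nlinarith

theorem antilipschitzWith_subSmul (hDd : Dense (D.domain : Set E)) (hD : D ≤ D†)
    (hlam : lam.im ≠ 0) : AntilipschitzWith ‖lam.im‖₊⁻¹ (subSmul D lam) :=
  AddMonoidHomClass.antilipschitz_of_bound _ fun x => by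
    rw [NNReal.coe_inv, coe_nnnorm, Real.norm_eq_abs, ← div_eq_inv_mul,
      le_div_iff₀' (abs_pos.mpr hlam)]
    exact abs_im_mul_norm_le_norm_subSmul hDd hD x

theorem exists_adjoint_apply_eq_of_mem_orthogonal (hDd : Dense (D.domain : Set E)) {v : E}
    (hv : v ∈ (LinearMap.range (subSmul D lam))ᗮ) :
    ∃ hv' : v ∈ D†.domain, D† ⟨v, hv'⟩ = conj lam • v := by
  have key : ∀ x : D.domain, ⟪conj lam • v, (x : E)⟫_ℂ = ⟪v, D x⟫_ℂ := fun x => by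
    have h := (Submodule.mem_orthogonal' _ v).mp hv _ (LinearMap.mem_range_self _ x)
    rw [subSmul_apply, inner_sub_right, inner_smul_right, sub_eq_zero] at h
    rw [inner_smul_left, Complex.conj_conj, h]
  have hv' : v ∈ D†.domain := mem_adjoint_domain_of_exists _ ⟨_, key⟩
  exact ⟨hv', adjoint_apply_eq hDd ⟨v, hv'⟩ key⟩

theorem _root_.IsSelfAdjoint.exists_isResolventAt (hD : IsSelfAdjoint D)
    (hlam : lam.im ≠ 0) : ∃ R : E →L[ℂ] E, IsResolventAt D lam R := by
  have hDd := hD.dense_domain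
  have hDsym : D ≤ D† := hD.ge
  have hK := antilipschitzWith_subSmul hDd hDsym hlam
  have hK' := antilipschitzWith_subSmul (lam := conj lam) hDd hDsym (by simpa using hlam)
  have horth : (LinearMap.range (subSmul D lam))ᗮ = ⊥ := by
    refine (Submodule.eq_bot_iff _).mpr fun v hv => ?_
    obtain ⟨hv', hDv⟩ := exists_adjoint_apply_eq_of_mem_orthogonal hDd hv
    have hvD : v ∈ D.domain := hD ▸ hv'
    have h0 : subSmul D (conj lam) ⟨v, hvD⟩ = subSmul D (conj lam) 0 := by
      rw [_root_.map_zero, subSmul_apply, ← hDv, sub_eq_zero]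
      exact hDsym.2 rfl
    exact congrArg Subtype.val (hK'.injective h0)
  have hsurj : LinearMap.range (subSmul D lam) = ⊤ := by
    rw [← (isClosed_range_subSmul hD.isClosed hK).submodule_topologicalClosure_eq]
    exact Submodule.topologicalClosure_eq_top_iff.mpr horth
  exact exists_isResolventAt_of_bijective ⟨hK.injective, LinearMap.range_eq_top.mp hsurj⟩ hK

theorem IsResolventAt.adjoint_eq (hDd : Dense (D.domain : Set E)) (hD : D ≤ D†)
    {R R' : E →L[ℂ] E} (hR : IsResolventAt D lam R) (hR' : IsResolventAt D (conj lam) R') :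
    ContinuousLinearMap.adjoint R = R' := by
  refine ((ContinuousLinearMap.eq_adjoint_iff R' R).mpr fun a b => ?_).symm
  have hsym := IsFormalAdjoint.of_le_adjoint hDd hD ⟨R' a, hR'.mem a⟩ ⟨R b, hR.mem b⟩
  calc ⟪R' a, b⟫_ℂ = ⟪R' a, D ⟨R b, hR.mem b⟩ - lam • R b⟫_ℂ := by rw [hR.right_inv]
    _ = ⟪D ⟨R' a, hR'.mem a⟩ - conj lam • R' a, R b⟫_ℂ := by
      rw [inner_sub_right, inner_sub_left, inner_smul_right, inner_smul_left, Complex.conj_conj,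
        ← hsym]
    _ = ⟪a, R b⟫_ℂ := by rw [hR'.right_inv]

end Resolvent

section SchurComplement

variable {H₁ H₂ : Type*} [NormedAddCommGroup H₁] [InnerProductSpace ℂ H₁]
  [NormedAddCommGroup H₂] [InnerProductSpace ℂ H₂]
  {A : H₁ →ₗ.[ℂ] H₁} {B : H₂ →ₗ.[ℂ] H₁} {C : H₁ →ₗ.[ℂ] H₂} {R : H₂ →L[ℂ] H₂}

noncomputable def schurComplement (A : H₁ →ₗ.[ℂ] H₁) (B : H₂ →ₗ.[ℂ] H₁) (C : H₁ →ₗ.[ℂ] H₂)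
    (R : H₂ →L[ℂ] H₂) : H₁ →ₗ.[ℂ] H₁ :=
  A - pcomp B ((R : H₂ →ₗ[ℂ] H₂).compPMap C)

theorem mem_domain_schurComplement (hRB : ∀ y, R y ∈ B.domain) {x : H₁} :
    x ∈ (schurComplement A B C R).domain ↔ x ∈ A.domain ∧ x ∈ C.domain :=
  ⟨fun ⟨hA, hC, _⟩ => ⟨hA, hC⟩, fun ⟨hA, hC⟩ => ⟨hA, hC, hRB _⟩⟩

theorem schurComplement_apply (hRB : ∀ y, R y ∈ B.domain)
    (x : (schurComplement A B C R).domain) (hA : (x : H₁) ∈ A.domain) (hC : (x : H₁) ∈ C.domain) :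
    schurComplement A B C R x = A ⟨x, hA⟩ - B ⟨R (C ⟨x, hC⟩), hRB _⟩ := rfl

variable [CompleteSpace H₁] [CompleteSpace H₂]

theorem isFormalAdjoint_schurComplement (hAd : Dense (A.domain : Set H₁))
    (hCd : Dense (C.domain : Set H₁)) (hA : A ≤ A†) (hBC : B ≤ C†) {R' : H₂ →L[ℂ] H₂}
    (hRB : ∀ y, R y ∈ B.domain) (hR'B : ∀ y, R' y ∈ B.domain)
    (hRR' : ContinuousLinearMap.adjoint R = R') :
    (schurComplement A B C R).IsFormalAdjoint (schurComplement A B C R') := by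
  intro x u
  obtain ⟨hxA, hxC⟩ := (mem_domain_schurComplement hRB).mp x.2
  obtain ⟨huA, huC⟩ := (mem_domain_schurComplement hR'B).mp u.2
  have hBC' := IsFormalAdjoint.of_le_adjoint hCd hBC
  rw [schurComplement_apply hRB x hxA hxC, schurComplement_apply hR'B u huA huC, inner_sub_left,
    inner_sub_right, IsFormalAdjoint.of_le_adjoint hAd hA ⟨x, hxA⟩ ⟨u, huA⟩,
    hBC' ⟨_, hRB _⟩ ⟨u, huC⟩, ← ContinuousLinearMap.adjoint_inner_right, hRR',
    ← hBC'.symm ⟨x, hxC⟩ ⟨_, hR'B _⟩]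

end SchurComplement

section BlockOperator

variable {H₁ H₂ : Type*} [NormedAddCommGroup H₁] [InnerProductSpace ℂ H₁]
  [NormedAddCommGroup H₂] [InnerProductSpace ℂ H₂]
  {A : H₁ →ₗ.[ℂ] H₁} {B : H₂ →ₗ.[ℂ] H₁} {C : H₁ →ₗ.[ℂ] H₂} {D : H₂ →ₗ.[ℂ] H₂}

theorem mem_domain_blockOpL_iff {x : WithLp 2 (H₁ × H₂)} :
    x ∈ (blockOpL A B C D).domain ↔
      (x.fst ∈ A.domain ∧ x.fst ∈ C.domain) ∧ x.snd ∈ B.domain ∧ x.snd ∈ D.domain :=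
  Iff.rfl

theorem inner_blockOpL_apply (Z : WithLp 2 (H₁ × H₂)) (x : (blockOpL A B C D).domain)
    (hA : (x : WithLp 2 (H₁ × H₂)).fst ∈ A.domain)
    (hC : (x : WithLp 2 (H₁ × H₂)).fst ∈ C.domain)
    (hB : (x : WithLp 2 (H₁ × H₂)).snd ∈ B.domain)
    (hD : (x : WithLp 2 (H₁ × H₂)).snd ∈ D.domain) :
    ⟪Z, blockOpL A B C D x⟫_ℂ =
      ⟪Z.fst, A ⟨_, hA⟩ + B ⟨_, hB⟩⟫_ℂ + ⟪Z.snd, C ⟨_, hC⟩ + D ⟨_, hD⟩⟫_ℂ :=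
  WithLp.prod_inner_apply _ _

theorem dense_domain_schurComplement
    (hdense : Dense ((blockOpL A B C D).domain : Set (WithLp 2 (H₁ × H₂))))
    {R : H₂ →L[ℂ] H₂} (hRB : ∀ y, R y ∈ B.domain) :
    Dense ((schurComplement A B C R).domain : Set H₁) := by
  have hfst : DenseRange (WithLp.fst : WithLp 2 (H₁ × H₂) → H₁) :=
    fun x => subset_closure ⟨WithLp.toLp 2 (x, 0), rfl⟩
  refine (hfst.dense_image (WithLp.continuous_fst 2 H₁ H₂) hdense).mono ?_
  rintro _ ⟨x, hx, rfl⟩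
  exact (mem_domain_schurComplement hRB).mpr hx.1

variable [CompleteSpace H₁] [CompleteSpace H₂]

theorem isFormalAdjoint_blockOpL
    (hAd : Dense (A.domain : Set H₁)) (hCd : Dense (C.domain : Set H₁))
    (hDd : Dense (D.domain : Set H₂)) (hA : A ≤ A†) (hBC : B ≤ C†) (hD : D ≤ D†) :
    (blockOpL A B C D).IsFormalAdjoint (blockOpL A B C D) := by
  intro x y
  obtain ⟨⟨hxA, hxC⟩, hxB, hxD⟩ := mem_domain_blockOpL_iff.mp x.2
  obtain ⟨⟨hyA, hyC⟩, hyB, hyD⟩ := mem_domain_blockOpL_iff.mp y.2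
  have hAA := IsFormalAdjoint.of_le_adjoint hAd hA
  have hBC' := IsFormalAdjoint.of_le_adjoint hCd hBC
  have hDD := IsFormalAdjoint.of_le_adjoint hDd hD
  rw [inner_blockOpL_apply _ y hyA hyC hyB hyD, ← inner_conj_symm,
    inner_blockOpL_apply _ x hxA hxC hxB hxD]
  simp only [inner_add_right, _root_.map_add, inner_conj_symm]
  rw [hAA ⟨_, hxA⟩ ⟨_, hyA⟩, hBC' ⟨_, hxB⟩ ⟨_, hyC⟩, hBC'.symm ⟨_, hxC⟩ ⟨_, hyB⟩,
    hDD ⟨_, hxD⟩ ⟨_, hyD⟩]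
  ring

theorem inner_adjoint_blockOpL_apply_fst
    (hdense : Dense ((blockOpL A B C D).domain : Set (WithLp 2 (H₁ × H₂))))
    {X : WithLp 2 (H₁ × H₂)} (hX : X ∈ (blockOpL A B C D)†.domain) {x₁ : H₁}
    (hA : x₁ ∈ A.domain) (hC : x₁ ∈ C.domain) :
    ⟪((blockOpL A B C D)† ⟨X, hX⟩).fst, x₁⟫_ℂ =
      ⟪X.fst, A ⟨x₁, hA⟩⟫_ℂ + ⟪X.snd, C ⟨x₁, hC⟩⟫_ℂ := by
  have h := adjoint_isFormalAdjoint hdense ⟨X, hX⟩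
    ⟨WithLp.toLp 2 (x₁, 0), ⟨hA, hC⟩, zero_mem _, zero_mem _⟩
  rw [WithLp.prod_inner_apply, inner_blockOpL_apply _ _ hA hC (zero_mem _) (zero_mem _)] at h
  simpa [show B ⟨0, zero_mem _⟩ = 0 from B.map_zero, show D ⟨0, zero_mem _⟩ = 0 from D.map_zero]
    using h

theorem inner_adjoint_blockOpL_apply_snd
    (hdense : Dense ((blockOpL A B C D).domain : Set (WithLp 2 (H₁ × H₂))))
    {X : WithLp 2 (H₁ × H₂)} (hX : X ∈ (blockOpL A B C D)†.domain) {x₂ : H₂}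
    (hB : x₂ ∈ B.domain) (hD : x₂ ∈ D.domain) :
    ⟪((blockOpL A B C D)† ⟨X, hX⟩).snd, x₂⟫_ℂ =
      ⟪X.fst, B ⟨x₂, hB⟩⟫_ℂ + ⟪X.snd, D ⟨x₂, hD⟩⟫_ℂ := by
  have h := adjoint_isFormalAdjoint hdense ⟨X, hX⟩
    ⟨WithLp.toLp 2 (0, x₂), ⟨zero_mem _, zero_mem _⟩, hB, hD⟩
  rw [WithLp.prod_inner_apply, inner_blockOpL_apply _ _ (zero_mem _) (zero_mem _) hB hD] at h
  simpa [show A ⟨0, zero_mem _⟩ = 0 from A.map_zero, show C ⟨0, zero_mem _⟩ = 0 from C.map_zero]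
    using h

theorem mem_adjoint_blockOpL_of_mem_adjoint_schurComplement {lam : ℂ} {R : H₂ →L[ℂ] H₂}
    (hR : IsResolventAt D lam R) (hRB : ∀ y, R y ∈ B.domain)
    (hSd : Dense ((schurComplement A B C R).domain : Set H₁))
    {G : H₂ →L[ℂ] H₁} (hG : ∀ y, G y = B ⟨R y, hRB y⟩)
    {u : H₁} (hu : u ∈ (schurComplement A B C R)†.domain) :
    WithLp.toLp 2 (u, -ContinuousLinearMap.adjoint G u) ∈ (blockOpL A B C D)†.domain := by
  refine mem_adjoint_domain_of_exists _ ⟨WithLp.toLp 2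
    ((schurComplement A B C R)† ⟨u, hu⟩, -(conj lam • ContinuousLinearMap.adjoint G u)),
    fun x => ?_⟩
  obtain ⟨⟨hA, hC⟩, hB, hD⟩ := mem_domain_blockOpL_iff.mp x.2
  have hS := adjoint_isFormalAdjoint hSd ⟨u, hu⟩
    ⟨_, (mem_domain_schurComplement hRB).mpr ⟨hA, hC⟩⟩
  rw [schurComplement_apply hRB _ hA hC, ← hG] at hS
  have hBx : B ⟨_, hB⟩ = G (D ⟨_, hD⟩ - lam • (x : WithLp 2 (H₁ × H₂)).snd) := by
    rw [hG]
    congr 1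
    exact Subtype.ext (hR.left_inv ⟨_, hD⟩).symm
  rw [WithLp.prod_inner_apply, inner_blockOpL_apply _ x hA hC hB hD, hBx]
  simp only [WithLp.ofLp_fst, WithLp.ofLp_snd, WithLp.toLp_fst, WithLp.toLp_snd] at hS ⊢
  simp only [inner_add_right, inner_sub_right, inner_neg_left, inner_smul_left, inner_smul_right,
    ← ContinuousLinearMap.adjoint_inner_left, Complex.conj_conj] at hS ⊢
  rw [hS]
  ring

theorem fst_mem_adjoint_schurComplement
    (hdense : Dense ((blockOpL A B C D).domain : Set (WithLp 2 (H₁ × H₂))))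
    (hCd : Dense (C.domain : Set H₁)) (hBC : B ≤ C†) {lam : ℂ} {R R' : H₂ →L[ℂ] H₂}
    (hR : IsResolventAt D lam R) (hRB : ∀ y, R y ∈ B.domain) (hR'B : ∀ y, R' y ∈ B.domain)
    (hRR' : ContinuousLinearMap.adjoint R = R') {X : WithLp 2 (H₁ × H₂)}
    (hX : X ∈ (blockOpL A B C D)†.domain) :
    X.fst ∈ (schurComplement A B C R)†.domain := by
  set Y := (blockOpL A B C D)† ⟨X, hX⟩
  set w := Y.snd - conj lam • X.snd
  refine mem_adjoint_domain_of_exists _ ⟨Y.fst - B ⟨R' w, hR'B w⟩, fun x => ?_⟩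
  obtain ⟨hA, hC⟩ := (mem_domain_schurComplement hRB).mp x.2
  set y := R (C ⟨x, hC⟩)
  have hcol₁ := inner_adjoint_blockOpL_apply_fst hdense hX hA hC
  have hcol₂ := inner_adjoint_blockOpL_apply_snd hdense hX (hRB _) (hR.mem (C ⟨x, hC⟩))
  have hBw : ⟪(B ⟨R' w, hR'B w⟩ : H₁), x⟫_ℂ = ⟪w, y⟫_ℂ := by
    rw [IsFormalAdjoint.of_le_adjoint hCd hBC ⟨_, hR'B w⟩ ⟨x, hC⟩,
      ← ContinuousLinearMap.adjoint_inner_left, hRR']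
  rw [schurComplement_apply hRB _ hA hC, inner_sub_left, inner_sub_right, hBw]
  rw [hR.apply_eq] at hcol₂
  simp only [w, inner_sub_left, inner_add_right, inner_smul_left, inner_smul_right,
    Complex.conj_conj] at hcol₂ ⊢
  linear_combination hcol₁ - hcol₂

theorem snd_mem_adjoint_of_mem_adjoint_blockOpL
    (hdense : Dense ((blockOpL A B C D).domain : Set (WithLp 2 (H₁ × H₂))))
    (hCd : Dense (C.domain : Set H₁)) (hBC : B ≤ C†) (hDB : D.domain ≤ B.domain)
    {X : WithLp 2 (H₁ × H₂)} (hX : X ∈ (blockOpL A B C D)†.domain) (hXC : X.fst ∈ C.domain) :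
    X.snd ∈ D†.domain := by
  refine mem_adjoint_domain_of_exists _
    ⟨((blockOpL A B C D)† ⟨X, hX⟩).snd - C ⟨X.fst, hXC⟩, fun x => ?_⟩
  rw [inner_sub_left, inner_adjoint_blockOpL_apply_snd hdense hX (hDB x.2) x.2,
    (IsFormalAdjoint.of_le_adjoint hCd hBC).symm ⟨_, hXC⟩ ⟨_, hDB x.2⟩]
  ring

theorem adjoint_schurComplement_eq_of_isSelfAdjoint (hAd : Dense (A.domain : Set H₁))
    (hCd : Dense (C.domain : Set H₁)) (hDd : Dense (D.domain : Set H₂))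
    (hA : A ≤ A†) (hBC : B ≤ C†) (hD : D ≤ D†) (hBc : B.IsClosable)
    (hdense : Dense ((blockOpL A B C D).domain : Set (WithLp 2 (H₁ × H₂))))
    (hDB : D.domain ≤ B.domain) (hT : IsSelfAdjoint (blockOpL A B C D))
    {lam : ℂ} {R R' : H₂ →L[ℂ] H₂} (hR : IsResolventAt D lam R)
    (hR' : IsResolventAt D (conj lam) R') :
    (schurComplement A B C R)† = schurComplement A B C R' := by
  have hRB : ∀ y, R y ∈ B.domain := fun y => hDB (hR.mem y)
  have hR'B : ∀ y, R' y ∈ B.domain := fun y => hDB (hR'.mem y)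
  have hSd := dense_domain_schurComplement hdense hRB
  have hle : schurComplement A B C R' ≤ (schurComplement A B C R)† :=
    (isFormalAdjoint_schurComplement hAd hCd hA hBC hRB hR'B
      (hR.adjoint_eq hDd hD hR')).le_adjoint hSd
  obtain ⟨G, hG⟩ := hBc.exists_continuousLinearMap_comp R hRB
  have hdom : (schurComplement A B C R)†.domain ≤ (schurComplement A B C R').domain := by
    intro u hu
    have hT' := mem_adjoint_blockOpL_of_mem_adjoint_schurComplement (D := D) hR hRB hSd hG hu
    rw [show (blockOpL A B C D)† = blockOpL A B C D from hT] at hT'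
    exact (mem_domain_schurComplement hR'B).mpr (mem_domain_blockOpL_iff.mp hT').1
  exact (eq_of_le_of_domain_eq hle (le_antisymm hle.1 hdom)).symm

theorem isSelfAdjoint_blockOpL_of_adjoint_schurComplement_eq
    (hAd : Dense (A.domain : Set H₁)) (hCd : Dense (C.domain : Set H₁)) (hA : A ≤ A†)
    (hBC : B ≤ C†) (hD : IsSelfAdjoint D)
    (hdense : Dense ((blockOpL A B C D).domain : Set (WithLp 2 (H₁ × H₂))))
    (hDB : D.domain ≤ B.domain) {lam : ℂ} {R R' : H₂ →L[ℂ] H₂} (hR : IsResolventAt D lam R)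
    (hR' : IsResolventAt D (conj lam) R')
    (hS : (schurComplement A B C R)† = schurComplement A B C R') :
    IsSelfAdjoint (blockOpL A B C D) := by
  have hRB : ∀ y, R y ∈ B.domain := fun y => hDB (hR.mem y)
  have hR'B : ∀ y, R' y ∈ B.domain := fun y => hDB (hR'.mem y)
  have hle : blockOpL A B C D ≤ (blockOpL A B C D)† :=
    (isFormalAdjoint_blockOpL hAd hCd hD.dense_domain hA hBC hD.ge).le_adjoint hdense
  have hdom : (blockOpL A B C D)†.domain ≤ (blockOpL A B C D).domain := by
    intro X hX
    have hX₁ : X.fst ∈ (schurComplement A B C R').domain := hS ▸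
      fst_mem_adjoint_schurComplement hdense hCd hBC hR hRB hR'B
        (hR.adjoint_eq hD.dense_domain hD.ge hR') hX
    obtain ⟨hXA, hXC⟩ := (mem_domain_schurComplement hR'B).mp hX₁
    have hX₂ : X.snd ∈ D.domain :=
      hD ▸ snd_mem_adjoint_of_mem_adjoint_blockOpL hdense hCd hBC hDB hX hXC
    exact mem_domain_blockOpL_iff.mpr ⟨⟨hXA, hXC⟩, hDB hX₂, hX₂⟩
  exact (eq_of_le_of_domain_eq hle (le_antisymm hle.1 hdom)).symm

end BlockOperator

theorem statement11_general {H₁ H₂ : Type*}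
    [NormedAddCommGroup H₁] [InnerProductSpace ℂ H₁] [CompleteSpace H₁]
    [NormedAddCommGroup H₂] [InnerProductSpace ℂ H₂] [CompleteSpace H₂]
    (A : H₁ →ₗ.[ℂ] H₁) (B : H₂ →ₗ.[ℂ] H₁) (C : H₁ →ₗ.[ℂ] H₂) (D : H₂ →ₗ.[ℂ] H₂)
    (hAd : Dense (A.domain : Set H₁))
    (hCd : Dense (C.domain : Set H₁))
    (hBc : B.IsClosable)
    (hAsym : A ≤ A.adjoint) (hBC : B ≤ C.adjoint)
    (hdense : Dense ((blockOpL A B C D).domain : Set (WithLp 2 (H₁ × H₂))))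
    (hD : IsSelfAdjoint D) (hDB : D.domain ≤ B.domain) :
    (IsSelfAdjoint (blockOpL A B C D) ↔
      ∃ (lam : ℂ) (R R' : H₂ →L[ℂ] H₂), IsResolventAt D lam R ∧
        IsResolventAt D (starRingEnd ℂ lam) R' ∧
        (A - pcomp B ((R : H₂ →ₗ[ℂ] H₂).compPMap C)).adjoint =
          A - pcomp B ((R' : H₂ →ₗ[ℂ] H₂).compPMap C)) ∧
    (IsSelfAdjoint (blockOpL A B C D) →
      ∀ (lam : ℂ) (R R' : H₂ →L[ℂ] H₂), IsResolventAt D lam R →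
        IsResolventAt D (starRingEnd ℂ lam) R' →
        (A - pcomp B ((R : H₂ →ₗ[ℂ] H₂).compPMap C)).adjoint =
          A - pcomp B ((R' : H₂ →ₗ[ℂ] H₂).compPMap C)) := by
  have hschur : IsSelfAdjoint (blockOpL A B C D) → ∀ (lam : ℂ) (R R' : H₂ →L[ℂ] H₂),
      IsResolventAt D lam R → IsResolventAt D (conj lam) R' →
      (schurComplement A B C R)† = schurComplement A B C R' := fun hT _ _ _ hR hR' =>
    adjoint_schurComplement_eq_of_isSelfAdjoint hAd hCd hD.dense_domain hAsym hBC hD.ge hBc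
      hdense hDB hT hR hR'
  refine ⟨⟨fun hT => ?_, fun ⟨lam, R, R', hR, hR', hS⟩ => ?_⟩, hschur⟩
  · obtain ⟨R, hR⟩ := hD.exists_isResolventAt (lam := Complex.I) (by simp)
    obtain ⟨R', hR'⟩ := hD.exists_isResolventAt (lam := conj Complex.I) (by simp)
    exact ⟨Complex.I, R, R', hR, hR', hschur hT _ R R' hR hR'⟩
  · exact isSelfAdjoint_blockOpL_of_adjoint_schurComplement_eq hAd hCd hAsym hBC hD hdense hDB
      hR hR' hS

theorem statement11 {H₁ H₂ : Type*}
    [NormedAddCommGroup H₁] [InnerProductSpace ℂ H₁] [CompleteSpace H₁]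
    [NormedAddCommGroup H₂] [InnerProductSpace ℂ H₂] [CompleteSpace H₂]
    (A : H₁ →ₗ.[ℂ] H₁) (B : H₂ →ₗ.[ℂ] H₁) (C : H₁ →ₗ.[ℂ] H₂) (D : H₂ →ₗ.[ℂ] H₂)
    (hAd : Dense (A.domain : Set H₁)) (hBd : Dense (B.domain : Set H₂))
    (hCd : Dense (C.domain : Set H₁)) (hDd : Dense (D.domain : Set H₂))
    (hAc : A.IsClosable) (hBc : B.IsClosable) (hCc : C.IsClosable) (hDc : D.IsClosable)
    (hAsym : A ≤ A.adjoint) (hBC : B ≤ C.adjoint) (hDsym : D ≤ D.adjoint)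
    (hdense : Dense ((blockOpL A B C D).domain : Set (WithLp 2 (H₁ × H₂))))
    (hD : IsSelfAdjoint D) (hDB : D.domain ≤ B.domain) :
    (IsSelfAdjoint (blockOpL A B C D) ↔
      ∃ (lam : ℂ) (R R' : H₂ →L[ℂ] H₂), IsResolventAt D lam R ∧
        IsResolventAt D (starRingEnd ℂ lam) R' ∧
        (A - pcomp B ((R : H₂ →ₗ[ℂ] H₂).compPMap C)).adjoint =
          A - pcomp B ((R' : H₂ →ₗ[ℂ] H₂).compPMap C)) ∧
    (IsSelfAdjoint (blockOpL A B C D) →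
      ∀ (lam : ℂ) (R R' : H₂ →L[ℂ] H₂), IsResolventAt D lam R →
        IsResolventAt D (starRingEnd ℂ lam) R' →
        (A - pcomp B ((R : H₂ →ₗ[ℂ] H₂).compPMap C)).adjoint =
          A - pcomp B ((R' : H₂ →ₗ[ℂ] H₂).compPMap C)) :=
  statement11_general A B C D hAd hCd hBc hAsym hBC hdense hD hDB

end BlockOp
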